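/- arXiv:math/0305336 — 2 statements merged into one kernel-verified Lean document; each statement's English description precedes it below -/
import Mathlib

section
/- Let 𝒜 be a central hyperplane arrangement of rank d ≥ 2 in ℝⁿ admitting a partition 𝒜 = 𝒜₀ ⊎ 𝒜₁ where 𝒜₀ has rank d−1 and for any H′,H″ ∈ 𝒜₁ there is a unique H ∈ 𝒜₀ with H′ ∩ H″ ⊆ H. Let D be the one-dimensional subspace (∩𝒜₀) ∩ Span(𝒜). Then no hyperplane H ∈ 𝒜₁ contains D. -/
open scoped RealInnerProductSpace

noncomputable section

variable {n : ℕ}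

/-- A (linear) hyperplane in ℝⁿ: the zero set of a nonzero linear functional,
expressed via the inner product with a nonzero normal vector. -/
def IsHyperplane (H : Set (EuclideanSpace ℝ (Fin n))) : Prop :=
  ∃ v : EuclideanSpace ℝ (Fin n), v ≠ 0 ∧ H = {x | ⟪v, x⟫ = 0}

/-- A central hyperplane arrangement: a finite nonempty collection of linear hyperplanes. -/
def IsCentralArrangement (A : Set (Set (EuclideanSpace ℝ (Fin n)))) : Prop :=
  A.Finite ∧ A.Nonempty ∧ ∀ H ∈ A, IsHyperplane H

/-- The complement of the union of the hyperplanes of the arrangement. -/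
def arrComplement (A : Set (Set (EuclideanSpace ℝ (Fin n)))) : Set (EuclideanSpace ℝ (Fin n)) :=
  (⋃ H ∈ A, H)ᶜ

/-- A region of the arrangement: the closure of a connected component of the complement
of the union of the hyperplanes. -/
def IsRegion (A : Set (Set (EuclideanSpace ℝ (Fin n)))) (R : Set (EuclideanSpace ℝ (Fin n))) :
    Prop :=
  ∃ x ∈ arrComplement A, R = closure (connectedComponentIn (arrComplement A) x)

/-- The hyperplane `H` separates the region `R` from the region `B`: their interiors lie on
strictly opposite sides of `H`. -/
def Separates (H R B : Set (EuclideanSpace ℝ (Fin n))) : Prop :=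
  ∃ v : EuclideanSpace ℝ (Fin n), v ≠ 0 ∧ H = {x | ⟪v, x⟫ = 0} ∧
    (∀ x ∈ interior R, 0 < ⟪v, x⟫) ∧ (∀ x ∈ interior B, ⟪v, x⟫ < 0)

/-- S(R): the set of hyperplanes of `A` separating `R` from the base region `B`. -/
def sepSet (A : Set (Set (EuclideanSpace ℝ (Fin n)))) (B R : Set (EuclideanSpace ℝ (Fin n))) :
    Set (Set (EuclideanSpace ℝ (Fin n))) :=
  {H | H ∈ A ∧ Separates H R B}

/-- The order of the poset of regions 𝒫(𝒜,B): containment of separating sets. -/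
def regLE (A : Set (Set (EuclideanSpace ℝ (Fin n)))) (B R₁ R₂ : Set (EuclideanSpace ℝ (Fin n))) :
    Prop :=
  sepSet A B R₁ ⊆ sepSet A B R₂

/-- Strict order on regions. -/
def regLT (A : Set (Set (EuclideanSpace ℝ (Fin n)))) (B R₁ R₂ : Set (EuclideanSpace ℝ (Fin n))) :
    Prop :=
  regLE A B R₁ R₂ ∧ ¬ regLE A B R₂ R₁

/-- The order dimension of the poset of regions 𝒫(𝒜,B): the smallest `d` such that it embeds
as an induced subposet of ℝᵈ with the componentwise order. -/
def regionOrderDim (A : Set (Set (EuclideanSpace ℝ (Fin n))))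
    (B : Set (EuclideanSpace ℝ (Fin n))) : ℕ :=
  sInf {d : ℕ | ∃ f : {R : Set (EuclideanSpace ℝ (Fin n)) // IsRegion A R} → (Fin d → ℝ),
    ∀ R₁ R₂, regLE A B R₁.1 R₂.1 ↔ ∀ i, f R₁ i ≤ f R₂ i}

/-- The rank-two subarrangement of `A` consisting of all hyperplanes of `A`
containing `H₁ ∩ H₂`. -/
def pencil (A : Set (Set (EuclideanSpace ℝ (Fin n)))) (H₁ H₂ : Set (EuclideanSpace ℝ (Fin n))) :
    Set (Set (EuclideanSpace ℝ (Fin n))) :=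
  {H | H ∈ A ∧ H₁ ∩ H₂ ⊆ H}

/-- `H` is basic in the subarrangement `A'` relative to the base region `B`:
`H ∈ A'` and `H` bounds (meets in codimension one) the region `B'` of `A'` containing `B`. -/
def IsBasicIn (A' : Set (Set (EuclideanSpace ℝ (Fin n)))) (B H : Set (EuclideanSpace ℝ (Fin n))) :
    Prop :=
  H ∈ A' ∧ ∃ B', IsRegion A' B' ∧ B ⊆ B' ∧
    Submodule.span ℝ (H ∩ B') = Submodule.span ℝ H

/-- The edge relation of the basic digraph 𝒟(𝒜,B): `H₁ → H₂` whenever `H₁` is basic in the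
rank-two subarrangement consisting of all hyperplanes of `A` containing `H₁ ∩ H₂`. -/
def BasicEdge (A : Set (Set (EuclideanSpace ℝ (Fin n))))
    (B H₁ H₂ : Set (EuclideanSpace ℝ (Fin n))) : Prop :=
  H₁ ∈ A ∧ H₂ ∈ A ∧ H₁ ≠ H₂ ∧ IsBasicIn (pencil A H₁ H₂) B H₁

/-- Span(𝒜): the linear span of the normal vectors of the hyperplanes of `A`,
i.e. the orthogonal complement of the intersection of the hyperplanes. -/
def arrSpan (A : Set (Set (EuclideanSpace ℝ (Fin n)))) :
    Submodule ℝ (EuclideanSpace ℝ (Fin n)) :=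
  (Submodule.span ℝ (⋂₀ A))ᗮ

/-- The rank of the arrangement `A`: the dimension of the span of its normal vectors. -/
def arrRank (A : Set (Set (EuclideanSpace ℝ (Fin n)))) : ℕ :=
  Module.finrank ℝ (arrSpan A)

/-- Supersolvability of a central arrangement: every arrangement of rank at most 2 is
supersolvable, and an arrangement of higher rank is supersolvable iff it admits a
partition `A = A₀ ⊎ A₁` with `A₀` supersolvable of rank one less, such that any two
distinct hyperplanes of `A₁` have their intersection inside a unique hyperplane of `A₀`. -/
inductive IsSupersolvable : Set (Set (EuclideanSpace ℝ (Fin n))) → Prop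
  | low : ∀ A : Set (Set (EuclideanSpace ℝ (Fin n))), arrRank A ≤ 2 → IsSupersolvable A
  | step : ∀ A A₀ A₁ : Set (Set (EuclideanSpace ℝ (Fin n))),
      A = A₀ ∪ A₁ → Disjoint A₀ A₁ →
      arrRank A₀ + 1 = arrRank A →
      (∀ H' ∈ A₁, ∀ H'' ∈ A₁, H' ≠ H'' → ∃! H, H ∈ A₀ ∧ H' ∩ H'' ⊆ H) →
      IsSupersolvable A₀ → IsSupersolvable A

/-- `B` is a canonical base region of the supersolvable arrangement `A`:
any region works in rank at most 2; in higher rank, the region `B₀` of `A₀` containing `B`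
is a canonical base region of `A₀` and the regions of `A` contained in `B₀` are linearly
ordered in 𝒫(𝒜,B). -/
inductive IsCanonicalBase :
    Set (Set (EuclideanSpace ℝ (Fin n))) → Set (EuclideanSpace ℝ (Fin n)) → Prop
  | low : ∀ (A : Set (Set (EuclideanSpace ℝ (Fin n)))) (B : Set (EuclideanSpace ℝ (Fin n))),
      arrRank A ≤ 2 → IsRegion A B → IsCanonicalBase A B
  | step : ∀ (A A₀ A₁ : Set (Set (EuclideanSpace ℝ (Fin n))))
      (B B₀ : Set (EuclideanSpace ℝ (Fin n))),
      A = A₀ ∪ A₁ → Disjoint A₀ A₁ →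
      arrRank A₀ + 1 = arrRank A →
      (∀ H' ∈ A₁, ∀ H'' ∈ A₁, H' ≠ H'' → ∃! H, H ∈ A₀ ∧ H' ∩ H'' ⊆ H) →
      IsRegion A B → IsRegion A₀ B₀ → B ⊆ B₀ →
      IsCanonicalBase A₀ B₀ →
      (∀ R R', IsRegion A R → IsRegion A R' → R ⊆ B₀ → R' ⊆ B₀ →
        regLE A B R R' ∨ regLE A B R' R) →
      IsCanonicalBase A B

/-! A dimension count gives a nonzero `x ∈ D`. As `x ⊥ ⋂ 𝒜`, some `H'' ∈ 𝒜₁` misses `x`.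
If `H' ∈ 𝒜₁` contained `D`, the hyperplane `H ∈ 𝒜₀` through `H' ∩ H''` would contain `x ∈ H' \ H''`
as well; but then `H' = (H' ∩ H'') + ℝx ⊆ H`, so `H' = H ∈ 𝒜₀`, contradicting `𝒜₀ ∩ 𝒜₁ = ∅`. -/

open Submodule LinearMap Module

section Functional

variable {K V : Type*} [Field K] [AddCommGroup V] [Module K V]

theorem Submodule.le_of_inf_ker_le {p q : Submodule K V} {f : V →ₗ[K] K} {x : V}
    (hxp : x ∈ p) (hxq : x ∈ q) (hfx : f x ≠ 0) (h : p ⊓ ker f ≤ q) : p ≤ q := by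
  intro y hy
  have hy' : y - (f y / f x) • x ∈ q :=
    h ⟨p.sub_mem hy (p.smul_mem _ hxp), by simp [div_mul_cancel₀ _ hfx]⟩
  simpa using q.add_mem hy' (q.smul_mem (f y / f x) hxq)

theorem LinearMap.ker_eq_of_ker_inf_ker_le {f g h : V →ₗ[K] K} (hf : f ≠ 0) (hh : h ≠ 0)
    {x : V} (hxf : f x = 0) (hxh : h x = 0) (hgx : g x ≠ 0) (hle : ker f ⊓ ker g ≤ ker h) :
    ker f = ker h :=
  ((isCoatom_ker_of_surjective (surjective_of_ne_zero hf)).le_iff.mp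
    (le_of_inf_ker_le hxf hxh hgx hle) |>.resolve_left (ker_eq_top.not.mpr hh)).symm

end Functional

theorem Submodule.inf_orthogonal_ne_bot_of_finrank_lt {𝕜 E : Type*} [RCLike 𝕜]
    [NormedAddCommGroup E] [InnerProductSpace 𝕜 E] [FiniteDimensional 𝕜 E]
    {p q : Submodule 𝕜 E} (h : finrank 𝕜 pᗮ < finrank 𝕜 qᗮ) : p ⊓ qᗮ ≠ ⊥ := by
  intro hbot
  have := finrank_add_finrank_le_of_disjoint (disjoint_iff.mpr hbot)
  have := p.finrank_add_finrank_orthogonal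
  omega

theorem Submodule.mem_sInter_of_mem_span {R M : Type*} [Semiring R] [AddCommMonoid M]
    [Module R M] {S : Set (Set M)} (hS : ∀ H ∈ S, ∃ p : Submodule R M, (p : Set M) = H)
    {x : M} (hx : x ∈ span R (⋂₀ S)) : x ∈ ⋂₀ S := by
  intro H hH
  obtain ⟨p, rfl⟩ := hS H hH
  exact span_le.mpr (Set.sInter_subset_of_mem hH) hx

theorem IsHyperplane.exists_eq_ker {H : Set (EuclideanSpace ℝ (Fin n))} (hH : IsHyperplane H) :
    ∃ f : EuclideanSpace ℝ (Fin n) →ₗ[ℝ] ℝ, f ≠ 0 ∧ H = ker f := by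
  obtain ⟨v, hv, rfl⟩ := hH
  refine ⟨innerₗ _ v, fun h => hv ?_, rfl⟩
  simpa using LinearMap.congr_fun h v

theorem IsHyperplane.eq_of_inter_subset {H H' H'' : Set (EuclideanSpace ℝ (Fin n))}
    (hH : IsHyperplane H) (hH' : IsHyperplane H') (hH'' : IsHyperplane H'')
    (hsub : H' ∩ H'' ⊆ H) {x : EuclideanSpace ℝ (Fin n)} (hxH : x ∈ H) (hxH' : x ∈ H')
    (hxH'' : x ∉ H'') : H' = H := by
  obtain ⟨f, hf, rfl⟩ := hH'.exists_eq_ker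
  obtain ⟨g, -, rfl⟩ := hH''.exists_eq_ker
  obtain ⟨h, hh, rfl⟩ := hH.exists_eq_ker
  exact congrArg _ (ker_eq_of_ker_inf_ker_le hf hh hxH' hxH hxH'' hsub)

theorem exists_ne_zero_mem_sInter_inter_arrSpan {A₀ A : Set (Set (EuclideanSpace ℝ (Fin n)))}
    (hA₀ : ∀ H ∈ A₀, IsHyperplane H) (h : arrRank A₀ < arrRank A) :
    ∃ x ∈ ⋂₀ A₀ ∩ (arrSpan A : Set (EuclideanSpace ℝ (Fin n))), x ≠ 0 := by
  obtain ⟨x, ⟨hx₀, hx⟩, hx0⟩ := (Submodule.ne_bot_iff _).mp (inf_orthogonal_ne_bot_of_finrank_lt h)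
  refine ⟨x, ⟨mem_sInter_of_mem_span (fun H hH => ?_) hx₀, hx⟩, hx0⟩
  obtain ⟨f, -, rfl⟩ := (hA₀ H hH).exists_eq_ker
  exact ⟨ker f, rfl⟩

theorem notMem_sInter_of_mem_arrSpan {A : Set (Set (EuclideanSpace ℝ (Fin n)))}
    {x : EuclideanSpace ℝ (Fin n)} (hx : x ∈ arrSpan A) (hx0 : x ≠ 0) : x ∉ ⋂₀ A := fun hxA =>
  hx0 (inner_self_eq_zero.mp (hx x (subset_span hxA)))

/-- **Lemma (Reading, Lemma 20).** Let `A` be a central arrangement of rank `d ≥ 2` admitting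
a partition `A = A₀ ⊎ A₁` where `A₀` has rank `d − 1` and any two distinct hyperplanes of
`A₁` have their intersection inside a unique hyperplane of `A₀`.  Let `D` be the
one-dimensional subspace `(⋂₀ A₀) ∩ Span(A)`.  Then no hyperplane of `A₁` contains `D`. -/
theorem no_hyperplane_contains_D {n d : ℕ} (hd : 2 ≤ d)
    (A A₀ A₁ : Set (Set (EuclideanSpace ℝ (Fin n))))
    (hA : IsCentralArrangement A) (hrank : arrRank A = d)
    (hpart : A = A₀ ∪ A₁) (hdisj : Disjoint A₀ A₁)
    (hrank₀ : arrRank A₀ = d - 1)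
    (hmod : ∀ H' ∈ A₁, ∀ H'' ∈ A₁, H' ≠ H'' → ∃! H, H ∈ A₀ ∧ H' ∩ H'' ⊆ H) :
    ∀ H ∈ A₁, ¬ (⋂₀ A₀ ∩ (arrSpan A : Set (EuclideanSpace ℝ (Fin n)))) ⊆ H := by
  intro H' hH' hD
  have hyp : ∀ H ∈ A, IsHyperplane H := hA.2.2
  obtain ⟨x, hxD, hx0⟩ := exists_ne_zero_mem_sInter_inter_arrSpan (A := A)
    (fun H hH => hyp H (hpart ▸ Or.inl hH)) (by omega)
  obtain ⟨H'', hH'', hxH''⟩ : ∃ H'' ∈ A, x ∉ H'' := by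
    simpa [Set.mem_sInter] using notMem_sInter_of_mem_arrSpan hxD.2 hx0
  have hH''₁ : H'' ∈ A₁ := (hpart ▸ hH'').resolve_left fun h => hxH'' (hxD.1 H'' h)
  obtain ⟨H, ⟨hH₀, hsub⟩, -⟩ := hmod H' hH' H'' hH''₁ (by rintro rfl; exact hxH'' (hD hxD))
  have hH'H : H' = H := IsHyperplane.eq_of_inter_subset (hyp H (hpart ▸ Or.inl hH₀))
    (hyp H' (hpart ▸ Or.inr hH')) (hyp H'' hH'') hsub (hxD.1 H hH₀) (hD hxD) hxH''
  exact Set.disjoint_left.mp hdisj hH₀ (hH'H ▸ hH')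
end
end

section
/- Let 𝒜 = 𝒜₀ ⊎ 𝒜₁ be a supersolvable central hyperplane arrangement of rank d ≥ 2 in ℝⁿ (with 𝒜₀ supersolvable of rank d−1 and, for any H′,H″ ∈ 𝒜₁, a unique H ∈ 𝒜₀ with H′ ∩ H″ ⊆ H), and let B be a canonical base region. Then 𝒜₁ induces an acyclic sub-digraph of the basic digraph 𝒟(𝒜,B). -/
open scoped RealInnerProductSpace

noncomputable section

variable {n : ℕ}

/-!
Orient the normals `W H` so that the base region lies on their positive side. To a hyperplane
`H` attach its crossing set: the generic points of the chamber of `A₀` containing `B` on the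
negative side of `H`. For `H ∈ A₁` these sets are nonempty, since `W H` is not in the span of
the normals of `A₀` (the rank drops by one), and they are totally ordered by inclusion, since
the regions inside `B₀` form a chain. For an edge `H → H'` inside `A₁`, write the normal of the
hyperplane `G ∈ A₀` containing `H ∩ H'` as `a • W H + b • W H'`. Basicness of `H` gives `b > 0`,
comparability of the crossing sets of `H` and `H'` forces `a < 0`, and then the crossing set of
`H'` is strictly smaller than that of `H`. So crossing sets strictly decrease along edges and
there is no cycle.
-/

open Set Submodule Filter Topology

section InnerProduct

variable {F : Type*} [NormedAddCommGroup F] [InnerProductSpace ℝ F]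

theorem mem_orthogonal_span_iff {s : Set F} {x : F} :
    x ∈ (span ℝ s)ᗮ ↔ ∀ u ∈ s, ⟪u, x⟫ = 0 := by
  refine ⟨fun hx u hu => hx u (subset_span hu), fun h u hu => ?_⟩
  induction hu using span_induction with
  | mem v hv => exact h v hv
  | zero => exact inner_zero_left x
  | add a b _ _ ha hb => rw [inner_add_left, ha, hb, add_zero]
  | smul c a _ ha => rw [real_inner_smul_left, ha, mul_zero]

theorem mem_span_of_forall_inner_eq_zero [FiniteDimensional ℝ F] {s : Set F} {v : F}
    (h : ∀ x, (∀ u ∈ s, ⟪u, x⟫ = 0) → ⟪v, x⟫ = 0) : v ∈ span ℝ s := by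
  rw [← orthogonal_orthogonal (span ℝ s), mem_orthogonal]
  exact fun x hx => by rw [real_inner_comm]; exact h x (mem_orthogonal_span_iff.1 hx)

theorem exists_smul_eq_of_forall_inner_eq_zero [FiniteDimensional ℝ F] {v w : F}
    (h : ∀ x, ⟪w, x⟫ = 0 → ⟪v, x⟫ = 0) : ∃ c : ℝ, c • w = v :=
  mem_span_singleton.1 <| mem_span_of_forall_inner_eq_zero fun x hx => h x (hx w rfl)

theorem coe_span_setOf_inner_eq_zero (w : F) :
    (span ℝ {x | ⟪w, x⟫ = 0} : Set F) = {x | ⟪w, x⟫ = 0} := by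
  have : {x | ⟪w, x⟫ = 0} = ((ℝ ∙ w)ᗮ : Set F) := by
    ext x; exact mem_orthogonal_singleton_iff_inner_right.symm
  rw [this, span_eq]

theorem exists_inner_neg_of_notMem [FiniteDimensional ℝ F] {K : Submodule ℝ F} {v : F}
    (hv : v ∉ K) (x₀ : F) : ∃ x, (∀ k ∈ K, ⟪k, x⟫ = ⟪k, x₀⟫) ∧ ⟪v, x⟫ < 0 := by
  rw [← orthogonal_orthogonal K, mem_orthogonal] at hv
  push Not at hv
  obtain ⟨u, hu, hvu⟩ := hv
  rw [real_inner_comm] at hvu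
  refine ⟨x₀ - ((⟪v, x₀⟫ + 1) / ⟪v, u⟫) • u, fun k hk => ?_, ?_⟩
  · rw [inner_sub_right, real_inner_smul_right, hu k hk, mul_zero, sub_zero]
  · rw [inner_sub_right, real_inner_smul_right, div_mul_cancel₀ _ hvu]
    linarith

theorem exists_pos_sub_smul_mem {U : Set F} {z : F} (hU : U ∈ 𝓝 z) (w : F) :
    ∃ t : ℝ, 0 < t ∧ z - t • w ∈ U := by
  have hcont : Tendsto (fun t : ℝ => z - t • w) (𝓝[>] 0) (𝓝 z) := by
    have : Continuous fun t : ℝ => z - t • w := by fun_prop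
    simpa using (this.tendsto 0).mono_left nhdsWithin_le_nhds
  exact ((hcont.eventually hU).and self_mem_nhdsWithin).exists.imp fun _ ht => ⟨ht.2, ht.1⟩

theorem inner_pos_of_mem_interior {C : Set F} {w z : F} (hw : w ≠ 0)
    (hC : ∀ y ∈ C, 0 ≤ ⟪w, y⟫) (hz : z ∈ interior C) : 0 < ⟪w, z⟫ := by
  obtain ⟨t, ht, hzt⟩ := exists_pos_sub_smul_mem (mem_interior_iff_mem_nhds.1 hz) w
  have := hC _ hzt
  rw [inner_sub_right, real_inner_smul_right] at this
  nlinarith [real_inner_self_pos.2 hw]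

theorem exists_inner_neg_of_isOpen {U : Set F} {w z : F} (hU : IsOpen U) (hzU : z ∈ U)
    (hw : w ≠ 0) (hz : ⟪w, z⟫ = 0) : ∃ y ∈ U, ⟪w, y⟫ < 0 := by
  by_contra! h
  exact (inner_pos_of_mem_interior hw h (hU.interior_eq.symm ▸ hzU)).ne' hz

theorem interior_setOf_inner_eq_zero {w : F} (hw : w ≠ 0) :
    interior {x | ⟪w, x⟫ = 0} = ∅ :=
  eq_empty_of_forall_notMem fun _ hz =>
    (inner_pos_of_mem_interior hw (fun y (hy : ⟪w, y⟫ = 0) => hy.ge) hz).ne'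
      (interior_subset (s := {x | ⟪w, x⟫ = 0}) hz)

theorem IsPreconnected.inner_pos {s : Set F} (hs : IsPreconnected s) {w x y : F}
    (hw : ∀ z ∈ s, ⟪w, z⟫ ≠ 0) (hx : x ∈ s) (hy : y ∈ s) (hxw : 0 < ⟪w, x⟫) :
    0 < ⟪w, y⟫ := by
  by_contra! hyw
  obtain ⟨z, hz, hzw⟩ := hs.intermediate_value hy hx
    (continuous_const.inner continuous_id).continuousOn ⟨hyw, hxw.le⟩
  exact hw z hz hzw

end InnerProduct

theorem connectedComponentIn_eq_of_mem_closure {X : Type*} [TopologicalSpace X]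
    [LocallyConnectedSpace X] {S : Set X} {x y : X} (hS : IsOpen S)
    (hy : y ∈ closure (connectedComponentIn S x)) (hyS : y ∈ S) :
    connectedComponentIn S y = connectedComponentIn S x := by
  obtain ⟨z, hzy, hzx⟩ := mem_closure_iff.1 hy _ hS.connectedComponentIn
    (mem_connectedComponentIn hyS)
  exact (connectedComponentIn_eq hzy).trans (connectedComponentIn_eq hzx).symm

theorem Relation.TransGen.apply_lt_apply {α β : Type*} [Preorder β] {r : α → α → Prop}
    {f : α → β} (hf : ∀ a b, r a b → f b < f a) {a b : α} (hab : Relation.TransGen r a b) :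
    f b < f a := by
  induction hab with
  | single h => exact hf _ _ h
  | tail _ h ih => exact (hf _ _ h).trans ih

section Arrangement

local notation "E" => EuclideanSpace ℝ (Fin n)

variable {A A₀ 𝒞 : Set (Set (EuclideanSpace ℝ (Fin n)))}
  {W : Set (EuclideanSpace ℝ (Fin n)) → EuclideanSpace ℝ (Fin n)}
  {B H H' G : Set (EuclideanSpace ℝ (Fin n))} {x₀ x₁ x y z : EuclideanSpace ℝ (Fin n)}

theorem IsHyperplane.isClosed (hH : IsHyperplane H) : IsClosed H := by
  obtain ⟨v, -, rfl⟩ := hH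
  exact isClosed_eq (continuous_const.inner continuous_id) continuous_const

theorem IsHyperplane.coe_span (hH : IsHyperplane H) : (span ℝ H : Set E) = H := by
  obtain ⟨v, -, rfl⟩ := hH
  exact coe_span_setOf_inner_eq_zero v

theorem IsHyperplane.eq_of_subset (hH : IsHyperplane H) (hH' : IsHyperplane H') (h : H ⊆ H') :
    H = H' := by
  obtain ⟨v, hv, rfl⟩ := hH
  obtain ⟨v', hv', rfl⟩ := hH'
  obtain ⟨c, rfl⟩ := exists_smul_eq_of_forall_inner_eq_zero fun x hx => h hx
  have hc : c ≠ 0 := by rintro rfl; exact hv' (zero_smul ℝ v)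
  ext x
  simp [real_inner_smul_left, hc]

theorem arrComplement_anti (h : 𝒞 ⊆ A) : arrComplement A ⊆ arrComplement 𝒞 :=
  compl_subset_compl.2 (biUnion_subset_biUnion_left h)

theorem isOpen_arrComplement (hfin : A.Finite) (hhyp : ∀ H ∈ A, IsHyperplane H) :
    IsOpen (arrComplement A) :=
  (hfin.isClosed_biUnion fun H hH => (hhyp H hH).isClosed).isOpen_compl

theorem dense_arrComplement (hfin : A.Finite) (hhyp : ∀ H ∈ A, IsHyperplane H) :
    Dense (arrComplement A) := by
  rw [arrComplement, compl_iUnion₂]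
  refine dense_biInter_of_isOpen (fun H hH => (hhyp H hH).isClosed.isOpen_compl)
    hfin.countable fun H hH => ?_
  obtain ⟨v, hv, rfl⟩ := hhyp H hH
  exact interior_eq_empty_iff_dense_compl.1 (interior_setOf_inner_eq_zero hv)

def regionThrough (A : Set (Set E)) (x : E) : Set E :=
  closure (connectedComponentIn (arrComplement A) x)

theorem mem_interior_regionThrough (hopen : IsOpen (arrComplement A))
    (hx : x ∈ arrComplement A) : x ∈ interior (regionThrough A x) :=
  interior_maximal subset_closure hopen.connectedComponentIn (mem_connectedComponentIn hx)

theorem self_mem_regionThrough (hx : x ∈ arrComplement A) : x ∈ regionThrough A x :=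
  subset_closure (mem_connectedComponentIn hx)

theorem IsRegion.eq_regionThrough {R : Set E} (hR : IsRegion A R)
    (hopen : IsOpen (arrComplement A)) (hy : y ∈ R) (hyA : y ∈ arrComplement A) :
    R = regionThrough A y := by
  obtain ⟨x, -, rfl⟩ := hR
  rw [regionThrough, connectedComponentIn_eq_of_mem_closure hopen hy hyA]

theorem inner_pos_of_mem_connectedComponentIn {w : E} (hw : {z | ⟪w, z⟫ = 0} ∈ A)
    (hx : 0 < ⟪w, x⟫) (hy : y ∈ connectedComponentIn (arrComplement A) x) : 0 < ⟪w, y⟫ :=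
  isPreconnected_connectedComponentIn.inner_pos
    (fun _ hz hwz => absurd (mem_biUnion hw hwz) (connectedComponentIn_subset _ _ hz))
    (mem_connectedComponentIn (connectedComponentIn_nonempty_iff.1 ⟨y, hy⟩)) hy hx

theorem inner_nonneg_of_mem_regionThrough {w : E} (hw : {z | ⟪w, z⟫ = 0} ∈ A)
    (hx : 0 < ⟪w, x⟫) (hz : z ∈ regionThrough A x) : 0 ≤ ⟪w, z⟫ :=
  closure_minimal (fun _ hy => (inner_pos_of_mem_connectedComponentIn hw hx hy).le)
    (isClosed_le continuous_const (continuous_const.inner continuous_id) :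
      IsClosed {y | 0 ≤ ⟪w, y⟫}) hz

theorem inner_pos_of_mem_interior_regionThrough {w : E} (hw : {z | ⟪w, z⟫ = 0} ∈ A)
    (hx : 0 < ⟪w, x⟫) (hz : z ∈ interior (regionThrough A x)) : 0 < ⟪w, z⟫ :=
  inner_pos_of_mem_interior (by rintro rfl; simp at hx)
    (fun _ hy => inner_nonneg_of_mem_regionThrough hw hx hy) hz

def IsNormalFamily (A : Set (Set E)) (W : Set E → E) : Prop :=
  ∀ H ∈ A, H = {y | ⟪W H, y⟫ = 0}

def positiveChamber (A : Set (Set E)) (W : Set E → E) : Set E :=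
  {x | ∀ H ∈ A, 0 < ⟪W H, x⟫}

theorem IsNormalFamily.mono (hW : IsNormalFamily A W) (h : 𝒞 ⊆ A) : IsNormalFamily 𝒞 W :=
  fun H hH => hW H (h hH)

theorem IsNormalFamily.mem_iff (hW : IsNormalFamily A W) (hH : H ∈ A) :
    y ∈ H ↔ ⟪W H, y⟫ = 0 :=
  Set.ext_iff.1 (hW H hH) y

theorem IsNormalFamily.setOf_mem (hW : IsNormalFamily A W) (hH : H ∈ A) :
    {y | ⟪W H, y⟫ = 0} ∈ A :=
  hW H hH ▸ hH

theorem exists_isNormalFamily (hhyp : ∀ H ∈ A, IsHyperplane H) (hx : x ∈ arrComplement A) :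
    ∃ W, IsNormalFamily A W ∧ x ∈ positiveChamber A W := by
  have : ∀ H ∈ A, ∃ w : E, H = {y | ⟪w, y⟫ = 0} ∧ 0 < ⟪w, x⟫ := by
    intro H hH
    obtain ⟨v, -, rfl⟩ := hhyp H hH
    have hvx : ⟪v, x⟫ ≠ 0 := fun h => hx (mem_biUnion hH h)
    rcases hvx.lt_or_gt with hneg | hpos
    · exact ⟨-v, by simp [inner_neg_left], by rwa [inner_neg_left, neg_pos]⟩
    · exact ⟨v, rfl, hpos⟩
  choose! W hW using this
  exact ⟨W, fun H hH => (hW H hH).1, fun H hH => (hW H hH).2⟩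

theorem positiveChamber_anti (h : 𝒞 ⊆ A) : positiveChamber A W ⊆ positiveChamber 𝒞 W :=
  fun _ hx H hH => hx H (h hH)

theorem ne_zero_of_mem_positiveChamber (hx : x ∈ positiveChamber A W) (hH : H ∈ A) :
    W H ≠ 0 := by
  intro h
  simpa [h] using hx H hH

theorem IsNormalFamily.positiveChamber_subset (hW : IsNormalFamily A W) :
    positiveChamber A W ⊆ arrComplement A := by
  intro x hx hxA
  obtain ⟨H, hH, hxH⟩ := mem_iUnion₂.1 hxA
  exact (hx H hH).ne' ((hW.mem_iff hH).1 hxH)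

theorem isOpen_positiveChamber (hfin : A.Finite) : IsOpen (positiveChamber A W) := by
  simp only [positiveChamber, ofPred_forall]
  exact hfin.isOpen_biInter fun H _ => isOpen_lt continuous_const
    (continuous_const.inner continuous_id)

theorem convex_positiveChamber : Convex ℝ (positiveChamber A W) := by
  simp only [positiveChamber, ofPred_forall]
  exact convex_iInter₂ fun H _ => convex_halfSpace_gt (innerₛₗ ℝ (W H)).isLinear 0

theorem IsNormalFamily.arrSpan_eq (hW : IsNormalFamily A W) : arrSpan A = span ℝ (W '' A) := by
  have : ⋂₀ A = ((span ℝ (W '' A))ᗮ : Set E) := by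
    ext x
    simp only [mem_sInter, SetLike.mem_coe, mem_orthogonal_span_iff, forall_mem_image]
    exact forall₂_congr fun H hH => hW.mem_iff hH
  rw [arrSpan, this, span_eq, orthogonal_orthogonal]

theorem mem_sepSet_regionThrough_iff (hopen : IsOpen (arrComplement A))
    (hW : IsNormalFamily A W) (hx₀ : x₀ ∈ positiveChamber A W) (hx : x ∈ arrComplement A) :
    H ∈ sepSet A (regionThrough A x₀) (regionThrough A x) ↔ H ∈ A ∧ ⟪W H, x⟫ < 0 := by
  constructor
  · rintro ⟨hH, v, -, hvH, hvx, hvx₀⟩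
    obtain ⟨c, rfl⟩ := exists_smul_eq_of_forall_inner_eq_zero (w := W H) (v := v)
      fun y hy => by simpa only [hvH, mem_ofPred_eq] using (hW.mem_iff hH).2 hy
    have h₁ := hvx x (mem_interior_regionThrough hopen hx)
    have h₂ := hvx₀ x₀ (mem_interior_regionThrough hopen (hW.positiveChamber_subset hx₀))
    rw [real_inner_smul_left] at h₁ h₂
    exact ⟨hH, by nlinarith [hx₀ H hH]⟩
  · rintro ⟨hH, hxH⟩
    have hker : {y | ⟪-W H, y⟫ = 0} = H := by
      simp only [inner_neg_left, neg_eq_zero]; exact (hW H hH).symm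
    refine ⟨hH, -W H, neg_ne_zero.2 (ne_zero_of_mem_positiveChamber hx₀ hH), hker.symm,
      fun z hz => inner_pos_of_mem_interior_regionThrough (by rwa [hker])
        (by rwa [inner_neg_left, neg_pos]) hz,
      fun z hz => ?_⟩
    rw [inner_neg_left, neg_neg_iff_pos]
    exact inner_pos_of_mem_interior_regionThrough (hW.setOf_mem hH) (hx₀ H hH) hz

theorem regionThrough_subset_of_mem_positiveChamber (h : 𝒞 ⊆ A) (hW : IsNormalFamily 𝒞 W)
    (hx₀ : x₀ ∈ positiveChamber 𝒞 W) (hx : x ∈ positiveChamber 𝒞 W) :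
    regionThrough A x ⊆ regionThrough 𝒞 x₀ := by
  have : connectedComponentIn (arrComplement 𝒞) x₀ = connectedComponentIn (arrComplement 𝒞) x :=
    connectedComponentIn_eq (convex_positiveChamber.isPreconnected.subset_connectedComponentIn
      hx₀ hW.positiveChamber_subset hx)
  rw [regionThrough, regionThrough, this]
  exact closure_mono (connectedComponentIn_mono x (arrComplement_anti h))

theorem IsNormalFamily.exists_eq_smul_add_smul (hhyp : ∀ H ∈ A, IsHyperplane H)
    (hW : IsNormalFamily A W) (hG : G ∈ A) (hH : H ∈ A) (hH' : H' ∈ A) (hsub : H ∩ H' ⊆ G)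
    (hGH : G ≠ H) (hGH' : G ≠ H') : ∃ a b : ℝ, a ≠ 0 ∧ b ≠ 0 ∧ W G = a • W H + b • W H' := by
  obtain ⟨a, b, hab⟩ := mem_span_pair.1 <| mem_span_of_forall_inner_eq_zero (s := {W H, W H'})
    fun x hx => (hW.mem_iff hG).1 (hsub ⟨(hW.mem_iff hH).2 (hx _ (by simp)),
      (hW.mem_iff hH').2 (hx _ (by simp))⟩)
  refine ⟨a, b, ?_, ?_, hab.symm⟩ <;> rintro rfl <;>
    simp only [zero_smul, zero_add, add_zero] at hab
  · refine hGH' ((hhyp H' hH').eq_of_subset (hhyp G hG) fun x hx => ?_).symm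
    rw [hW.mem_iff hG, ← hab, real_inner_smul_left, (hW.mem_iff hH').1 hx, mul_zero]
  · refine hGH ((hhyp H hH).eq_of_subset (hhyp G hG) fun x hx => ?_).symm
    rw [hW.mem_iff hG, ← hab, real_inner_smul_left, (hW.mem_iff hH).1 hx, mul_zero]

/-- The regions of `A` inside `B₀` separated from `B` by `H` are the regions through the points
of this set. -/
def crossingSet (A A₀ : Set (Set E)) (W : Set E → E) (H : Set E) : Set E :=
  positiveChamber A₀ W ∩ {x | ⟪W H, x⟫ < 0} ∩ arrComplement A

theorem crossingSet_nonempty (hdense : Dense (arrComplement A)) (hfin : A₀.Finite)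
    (hx₀ : x₀ ∈ positiveChamber A₀ W) (hH : W H ∉ span ℝ (W '' A₀)) :
    (crossingSet A A₀ W H).Nonempty := by
  obtain ⟨x, hx, hxH⟩ := exists_inner_neg_of_notMem hH x₀
  refine hdense.inter_open_nonempty _ ((isOpen_positiveChamber hfin).inter
    (isOpen_lt (continuous_const.inner continuous_id) continuous_const)) ⟨x, fun G hG => ?_, hxH⟩
  rw [hx _ (subset_span ⟨G, hG, rfl⟩)]
  exact hx₀ G hG

theorem crossingSet_subset_or_subset (hopen : IsOpen (arrComplement A))
    (hW : IsNormalFamily A W) (hx₀ : x₀ ∈ positiveChamber A W)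
    (hchain : ∀ x ∈ positiveChamber A₀ W ∩ arrComplement A,
      ∀ y ∈ positiveChamber A₀ W ∩ arrComplement A,
      regLE A (regionThrough A x₀) (regionThrough A x) (regionThrough A y) ∨
        regLE A (regionThrough A x₀) (regionThrough A y) (regionThrough A x))
    (hH : H ∈ A) (hH' : H' ∈ A) :
    crossingSet A A₀ W H ⊆ crossingSet A A₀ W H' ∨
      crossingSet A A₀ W H' ⊆ crossingSet A A₀ W H := by
  have hmono : ∀ K ∈ A, ∀ x ∈ crossingSet A A₀ W K, ∀ y ∈ positiveChamber A₀ W ∩ arrComplement A,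
      regLE A (regionThrough A x₀) (regionThrough A x) (regionThrough A y) →
      y ∈ crossingSet A A₀ W K := by
    rintro K hK x ⟨⟨-, hxK⟩, hxA⟩ y ⟨hyC, hyA⟩ hle
    have := hle ((mem_sepSet_regionThrough_iff hopen hW hx₀ hxA).2 ⟨hK, hxK⟩)
    exact ⟨⟨hyC, ((mem_sepSet_regionThrough_iff hopen hW hx₀ hyA).1 this).2⟩, hyA⟩
  by_contra! h
  obtain ⟨⟨x, hx, hxH'⟩, ⟨y, hy, hyH⟩⟩ := And.intro (not_subset.1 h.1) (not_subset.1 h.2)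
  rcases hchain x ⟨hx.1.1, hx.2⟩ y ⟨hy.1.1, hy.2⟩ with hle | hle
  · exact hyH (hmono H hH x hx y ⟨hy.1.1, hy.2⟩ hle)
  · exact hxH' (hmono H' hH' y hy x ⟨hx.1.1, hx.2⟩ hle)

theorem IsBasicIn.exists_inner_eq_zero_inner_pos (hopen : IsOpen (arrComplement 𝒞))
    (hhyp : ∀ K ∈ 𝒞, IsHyperplane K) (hW : IsNormalFamily 𝒞 W)
    (hx₀ : x₀ ∈ positiveChamber 𝒞 W) (hx₀B : x₀ ∈ B) (hbasic : IsBasicIn 𝒞 B H)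
    (hH' : H' ∈ 𝒞) (hne : H ≠ H') :
    ∃ p, ⟪W H, p⟫ = 0 ∧ 0 < ⟪W H', p⟫ ∧ ∀ K ∈ 𝒞, 0 ≤ ⟪W K, p⟫ := by
  obtain ⟨hH, B', hB', hBB', hspan⟩ := hbasic
  have hB'eq := hB'.eq_regionThrough hopen (hBB' hx₀B) (hW.positiveChamber_subset hx₀)
  have hnonneg : ∀ K ∈ 𝒞, ∀ z ∈ B', 0 ≤ ⟪W K, z⟫ := fun K hK z hz =>
    inner_nonneg_of_mem_regionThrough (hW.setOf_mem hK) (hx₀ K hK) (hB'eq ▸ hz)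
  have hnot : ¬ H ∩ B' ⊆ H' := fun hsub => hne <| (hhyp H hH).eq_of_subset (hhyp H' hH') <|
    calc H ⊆ span ℝ H := subset_span
      _ = span ℝ (H ∩ B') := by rw [hspan]
      _ ⊆ span ℝ H' := span_mono hsub
      _ = H' := (hhyp H' hH').coe_span
  obtain ⟨p, ⟨hpH, hpB'⟩, hpH'⟩ := not_subset.1 hnot
  exact ⟨p, (hW.mem_iff hH).1 hpH,
    (hnonneg H' hH' p hpB').lt_of_ne' (mt (hW.mem_iff hH').2 hpH'), fun K hK => hnonneg K hK p hpB'⟩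

section Pencil

variable {a b : ℝ}

theorem crossingSet_subset_of_eq_smul_add_smul (hG : G ∈ A₀) (hab : W G = a • W H + b • W H')
    (ha : a < 0) (hb : 0 < b) : crossingSet A A₀ W H' ⊆ crossingSet A A₀ W H := by
  rintro x ⟨⟨hxC, hxH' : ⟪W H', x⟫ < 0⟩, hxA⟩
  have hxG := hxC G hG
  rw [hab, inner_add_left, real_inner_smul_left, real_inner_smul_left] at hxG
  exact ⟨⟨hxC, show ⟪W H, x⟫ < 0 by nlinarith [mul_neg_of_pos_of_neg hb hxH']⟩, hxA⟩

theorem disjoint_crossingSet_of_eq_smul_add_smul (hG : G ∈ A₀)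
    (hab : W G = a • W H + b • W H') (ha : 0 ≤ a) (hb : 0 ≤ b) :
    Disjoint (crossingSet A A₀ W H) (crossingSet A A₀ W H') := by
  rw [Set.disjoint_left]
  rintro x ⟨⟨hxC, hxH⟩, -⟩ ⟨⟨-, hxH'⟩, -⟩
  have hxG := hxC G hG
  rw [hab, inner_add_left, real_inner_smul_left, real_inner_smul_left] at hxG
  nlinarith [mul_nonpos_of_nonneg_of_nonpos ha hxH.le, mul_nonpos_of_nonneg_of_nonpos hb hxH'.le]

/-- The segment from `x₀` to `x₁` meets `H` at a point `z` of the chamber, where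
`⟪W G, z⟫ = b * ⟪W H', z⟫` makes `H'` positive; pushing `z` slightly across `H` gives a point of
the difference. -/
theorem not_crossingSet_subset_of_eq_smul_add_smul (hdense : Dense (arrComplement A))
    (hfin : A₀.Finite) (hG : G ∈ A₀) (hab : W G = a • W H + b • W H') (hb : 0 < b)
    (hx₀ : x₀ ∈ positiveChamber A₀ W) (hx₀H : 0 < ⟪W H, x₀⟫)
    (hx₁ : x₁ ∈ positiveChamber A₀ W) (hx₁H : ⟪W H, x₁⟫ < 0) :
    ¬ crossingSet A A₀ W H ⊆ crossingSet A A₀ W H' := by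
  obtain ⟨z, hzC, hzH : ⟪W H, z⟫ = 0⟩ :=
    convex_positiveChamber.isPreconnected.intermediate_value hx₁ hx₀
      (continuous_const.inner continuous_id).continuousOn ⟨hx₁H.le, hx₀H.le⟩
  have hzH' : 0 < ⟪W H', z⟫ := by
    have hzG := hzC G hG
    rw [hab, inner_add_left, real_inner_smul_left, real_inner_smul_left, hzH] at hzG
    exact pos_of_mul_pos_right (by simpa using hzG) hb.le
  have hU : IsOpen (positiveChamber A₀ W ∩ {y | 0 < ⟪W H', y⟫}) :=
    (isOpen_positiveChamber hfin).inter (isOpen_lt (by fun_prop) (by fun_prop))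
  obtain ⟨y, hyU, hyH⟩ :=
    exists_inner_neg_of_isOpen hU ⟨hzC, hzH'⟩ (by rintro h; simp [h] at hx₀H) hzH
  obtain ⟨x, ⟨⟨hxC, hxH' : 0 < ⟪W H', x⟫⟩, hxH⟩, hxA⟩ :=
    hdense.inter_open_nonempty _
      (hU.inter (isOpen_lt (f := fun y => ⟪W H, y⟫) (by fun_prop) continuous_const)) ⟨y, hyU, hyH⟩
  exact fun h => (h ⟨⟨hxC, hxH⟩, hxA⟩).1.2.not_gt hxH'

end Pencil

theorem crossingSet_ssubset_of_basicEdge (hfin : A.Finite) (hhyp : ∀ H ∈ A, IsHyperplane H)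
    (hW : IsNormalFamily A W) (hx₀ : x₀ ∈ positiveChamber A W) (hA₀ : A₀ ⊆ A)
    (hG : G ∈ A₀) (hGH : G ≠ H) (hGH' : G ≠ H') (hsub : H ∩ H' ⊆ G)
    (hedge : BasicEdge A (regionThrough A x₀) H H')
    (hne : (crossingSet A A₀ W H).Nonempty) (hne' : (crossingSet A A₀ W H').Nonempty)
    (htotal : crossingSet A A₀ W H ⊆ crossingSet A A₀ W H' ∨
      crossingSet A A₀ W H' ⊆ crossingSet A A₀ W H) :
    crossingSet A A₀ W H' ⊂ crossingSet A A₀ W H := by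
  obtain ⟨hH, hH', hHH', hbasic⟩ := hedge
  obtain ⟨a, b, ha, hb, hab⟩ := hW.exists_eq_smul_add_smul hhyp (hA₀ hG) hH hH' hsub hGH hGH'
  have hP : pencil A H H' ⊆ A := fun K hK => hK.1
  obtain ⟨p, hpH, hpH', hpP⟩ := hbasic.exists_inner_eq_zero_inner_pos
    (isOpen_arrComplement (hfin.subset hP) fun K hK => hhyp K (hP hK)) (fun K hK => hhyp K (hP hK))
    (hW.mono hP) (positiveChamber_anti hP hx₀)
    (self_mem_regionThrough (hW.positiveChamber_subset hx₀)) ⟨hH', inter_subset_right⟩ hHH'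
  have hb_pos : 0 < b := by
    have hpG := hpP G ⟨hA₀ hG, hsub⟩
    rw [hab, inner_add_left, real_inner_smul_left, real_inner_smul_left, hpH, mul_zero,
      zero_add] at hpG
    exact (nonneg_of_mul_nonneg_left hpG hpH').lt_of_ne' hb
  have ha_neg : a < 0 := by
    by_contra! ha_nonneg
    have hdisj := disjoint_crossingSet_of_eq_smul_add_smul (A := A) hG hab ha_nonneg hb_pos.le
    rcases htotal with h | h
    · exact hne.ne_empty (hdisj.eq_bot_of_le h)
    · exact hne'.ne_empty (hdisj.symm.eq_bot_of_le h)
  have hsub' := crossingSet_subset_of_eq_smul_add_smul (A := A) hG hab ha_neg hb_pos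
  obtain ⟨x₁, ⟨hx₁C, hx₁H⟩, -⟩ := hne'.mono hsub'
  exact ⟨hsub', not_crossingSet_subset_of_eq_smul_add_smul (dense_arrComplement hfin hhyp)
    (hfin.subset hA₀) hG hab hb_pos (positiveChamber_anti hA₀ hx₀) (hx₀ H hH) hx₁C hx₁H⟩

theorem IsNormalFamily.apply_notMem_span_of_arrRank_lt (hhyp : ∀ H ∈ A, IsHyperplane H)
    (hW : IsNormalFamily A W) (hpart : A = A₀ ∪ A₁) (hdisj : Disjoint A₀ A₁)
    (hrank : arrRank A₀ < arrRank A)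
    (hmod : ∀ H ∈ A₁, ∀ H' ∈ A₁, H ≠ H' → ∃ G, G ∈ A₀ ∧ H ∩ H' ⊆ G) :
    ∀ H ∈ A₁, W H ∉ span ℝ (W '' A₀) := by
  have hA₀ : A₀ ⊆ A := hpart ▸ subset_union_left
  have hA₁ : A₁ ⊆ A := hpart ▸ subset_union_right
  obtain ⟨H', hH', hH'span⟩ : ∃ H' ∈ A₁, W H' ∉ span ℝ (W '' A₀) := by
    by_contra! hall
    refine hrank.not_ge ?_
    rw [arrRank, arrRank, hW.arrSpan_eq, (hW.mono hA₀).arrSpan_eq]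
    refine finrank_mono (span_le.2 ?_)
    rintro _ ⟨H, hH, rfl⟩
    rcases hpart ▸ hH with hH | hH
    exacts [subset_span ⟨H, hH, rfl⟩, hall H hH]
  intro H hH hHspan
  have hHH' : H ≠ H' := by rintro rfl; exact hH'span hHspan
  obtain ⟨G, hG, hsub⟩ := hmod H hH H' hH' hHH'
  obtain ⟨a, b, -, hb, hab⟩ := hW.exists_eq_smul_add_smul hhyp (hA₀ hG) (hA₁ hH) (hA₁ hH')
    hsub (hdisj.ne_of_mem hG hH) (hdisj.ne_of_mem hG hH')
  have : W H' = b⁻¹ • (W G - a • W H) := by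
    rw [hab, add_sub_cancel_left, smul_smul, inv_mul_cancel₀ hb, one_smul]
  exact hH'span (this ▸ smul_mem _ _ (sub_mem (subset_span ⟨G, hG, rfl⟩) (smul_mem _ _ hHspan)))

end Arrangement

theorem supersolvable_A₁_acyclic_general {n d : ℕ} (hd : 2 ≤ d)
    (A A₀ A₁ : Set (Set (EuclideanSpace ℝ (Fin n))))
    (B B₀ : Set (EuclideanSpace ℝ (Fin n)))
    (hA : IsCentralArrangement A) (hrank : arrRank A = d)
    (hpart : A = A₀ ∪ A₁) (hdisj : Disjoint A₀ A₁)
    (hrank₀ : arrRank A₀ = d - 1)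
    (hmod : ∀ H' ∈ A₁, ∀ H'' ∈ A₁, H' ≠ H'' → ∃! H, H ∈ A₀ ∧ H' ∩ H'' ⊆ H)
    (hB : IsRegion A B) (hB₀ : IsRegion A₀ B₀) (hBB₀ : B ⊆ B₀)
    (hchain : ∀ R R', IsRegion A R → IsRegion A R' → R ⊆ B₀ → R' ⊆ B₀ →
      regLE A B R R' ∨ regLE A B R' R) :
    ∀ H, ¬ Relation.TransGen
      (fun H₁ H₂ => H₁ ∈ A₁ ∧ H₂ ∈ A₁ ∧ BasicEdge A B H₁ H₂) H H := by
  obtain ⟨hfin, -, hhyp⟩ := hA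
  obtain ⟨x₀, hx₀, rfl⟩ := hB
  obtain ⟨W, hW, hx₀W⟩ := exists_isNormalFamily hhyp hx₀
  have hA₀ : A₀ ⊆ A := hpart ▸ subset_union_left
  have hA₁ : A₁ ⊆ A := hpart ▸ subset_union_right
  have hx₀W₀ := positiveChamber_anti hA₀ hx₀W
  have hsubB₀ : ∀ x ∈ positiveChamber A₀ W, regionThrough A x ⊆ regionThrough A₀ x₀ :=
    fun x hx => regionThrough_subset_of_mem_positiveChamber hA₀ (hW.mono hA₀) hx₀W₀ hx
  obtain rfl : B₀ = regionThrough A₀ x₀ := hB₀.eq_regionThrough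
    (isOpen_arrComplement (hfin.subset hA₀) fun H hH => hhyp H (hA₀ hH))
    (hBB₀ (self_mem_regionThrough hx₀)) (arrComplement_anti hA₀ hx₀)
  have hmod' : ∀ H ∈ A₁, ∀ H' ∈ A₁, H ≠ H' → ∃ G, G ∈ A₀ ∧ H ∩ H' ⊆ G :=
    fun H hH H' hH' hHH' => (hmod H hH H' hH' hHH').exists
  have hne : ∀ H ∈ A₁, (crossingSet A A₀ W H).Nonempty := fun H hH =>
    crossingSet_nonempty (dense_arrComplement hfin hhyp) (hfin.subset hA₀) hx₀W₀
      (hW.apply_notMem_span_of_arrRank_lt hhyp hpart hdisj (by omega) hmod' H hH)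
  have htotal : ∀ H ∈ A₁, ∀ H' ∈ A₁, crossingSet A A₀ W H ⊆ crossingSet A A₀ W H' ∨
      crossingSet A A₀ W H' ⊆ crossingSet A A₀ W H := fun H hH H' hH' =>
    crossingSet_subset_or_subset (isOpen_arrComplement hfin hhyp) hW hx₀W
      (fun x hx y hy => hchain _ _ ⟨x, hx.2, rfl⟩ ⟨y, hy.2, rfl⟩ (hsubB₀ x hx.1) (hsubB₀ y hy.1))
      (hA₁ hH) (hA₁ hH')
  intro H hcycle
  refine lt_irrefl _ (hcycle.apply_lt_apply (f := crossingSet A A₀ W) ?_)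
  rintro H H' ⟨hH, hH', hedge⟩
  obtain ⟨G, hG, hsub⟩ := hmod' H hH H' hH' hedge.2.2.1
  exact crossingSet_ssubset_of_basicEdge hfin hhyp hW hx₀W hA₀ hG (hdisj.ne_of_mem hG hH)
    (hdisj.ne_of_mem hG hH') hsub hedge (hne H hH) (hne H' hH') (htotal H hH H' hH')

/-- **Proposition (Reading, Proposition 21).** Let `A = A₀ ⊎ A₁` be a supersolvable central
arrangement of rank `d ≥ 2` (with `A₀` supersolvable of rank `d − 1`, and any two distinct
hyperplanes of `A₁` having their intersection inside a unique hyperplane of `A₀`), and let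
`B` be a canonical base region (so the region `B₀` of `A₀` containing `B` is a canonical
base region of `A₀`, and the regions of `A` contained in `B₀` are linearly ordered in
𝒫(𝒜,B)).  Then `A₁` induces an acyclic sub-digraph of the basic digraph 𝒟(𝒜,B). -/
theorem supersolvable_A₁_acyclic {n d : ℕ} (hd : 2 ≤ d)
    (A A₀ A₁ : Set (Set (EuclideanSpace ℝ (Fin n))))
    (B B₀ : Set (EuclideanSpace ℝ (Fin n)))
    (hA : IsCentralArrangement A) (hrank : arrRank A = d)
    (hpart : A = A₀ ∪ A₁) (hdisj : Disjoint A₀ A₁)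
    (hrank₀ : arrRank A₀ = d - 1) (hss₀ : IsSupersolvable A₀)
    (hmod : ∀ H' ∈ A₁, ∀ H'' ∈ A₁, H' ≠ H'' → ∃! H, H ∈ A₀ ∧ H' ∩ H'' ⊆ H)
    (hB : IsRegion A B) (hB₀ : IsRegion A₀ B₀) (hBB₀ : B ⊆ B₀)
    (hcan₀ : IsCanonicalBase A₀ B₀)
    (hchain : ∀ R R', IsRegion A R → IsRegion A R' → R ⊆ B₀ → R' ⊆ B₀ →
      regLE A B R R' ∨ regLE A B R' R) :
    ∀ H, ¬ Relation.TransGen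
      (fun H₁ H₂ => H₁ ∈ A₁ ∧ H₂ ∈ A₁ ∧ BasicEdge A B H₁ H₂) H H :=
  supersolvable_A₁_acyclic_general hd A A₀ A₁ B B₀ hA hrank hpart hdisj hrank₀ hmod hB hB₀ hBB₀
    hchain
end
end
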